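/- The packing chromatic number of the distance graph D(4,7) is at least 16. -/

import Mathlib

/-- The infinite distance graph `D(k,t)` on vertex set `ℤ`: distinct `i, j` are
adjacent iff `|i - j| ∈ {k, t}`. -/
def distGraph (k t : ℕ) : SimpleGraph ℤ where
  Adj i j := i ≠ j ∧ ((i - j).natAbs = k ∨ (i - j).natAbs = t)
  symm := by
    constructor
    rintro i j ⟨hne, hd⟩
    refine ⟨hne.symm, ?_⟩
    rwa [show j - i = -(i - j) by ring, Int.natAbs_neg]
  loopless := by constructor; rintro i ⟨hne, -⟩; exact hne rfl

/-- `c` is a packing `p`-coloring of `G`: each vertex gets a color in `{1, …, p}`,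
and any two distinct vertices with the same color `c` are at distance greater
than `c` (in particular, unreachable pairs have infinite distance). -/
def IsPackingColoring {V : Type*} (G : SimpleGraph V) (p : ℕ) (c : V → ℕ) : Prop :=
  (∀ v, 1 ≤ c v ∧ c v ≤ p) ∧
  ∀ u v : V, u ≠ v → c u = c v → (c u : ℕ∞) < G.edist u v

/-- The packing chromatic number of `G`: the smallest `p` (as an element of `ℕ∞`,
being `⊤` if no finite packing coloring exists) admitting a packing `p`-coloring. -/
noncomputable def packingChromaticNumber {V : Type*} (G : SimpleGraph V) : ℕ∞ :=
  sInf {q : ℕ∞ | ∃ p : ℕ, q = p ∧ ∃ c : V → ℕ, IsPackingColoring G p c}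

/-!
Suppose `c` were a packing 15-colouring of `D(4,7)` and count colours among the vertices
`0, …, 1999`. A gap `g = 4x + 7y` with `|x| + |y| ≤ r` is a graph distance of at most `r`, so
two vertices of colour `r` never have such a gap. For `r ≥ 5` every gap in `[1, 7r - 9]` is of
this form, so a block of `7r - 8` consecutive vertices holds at most one vertex of colour `r`;
among three vertices of colour 3 (resp. 4) inside a block of 19 (resp. 26), one of the three
gaps is of this form, so such a block holds at most two of them. Colours 1 and 2 are counted
together by an amortised argument: an automaton reads the colouring from left to right,
remembering which of the next positions are forbidden for colours 1 and 2, and a potential on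
its reachable states, found by computer and checked by evaluation, shows that these two
colours fill at most `13/22` of any prefix, up to an additive constant. Altogether at most 1970
of the 2000 vertices receive a colour.
-/

open Finset

def IsShortCombination (k t r : ℕ) (g : ℤ) : Prop :=
  ∃ x y : ℤ, k * x + t * y = g ∧ x.natAbs + y.natAbs ≤ r

theorem isShortCombination_iff {k t r : ℕ} {g : ℤ} :
    IsShortCombination k t r g ↔ ∃ i ∈ List.range (2 * r + 1),
      (g - k * ((i : ℤ) - r)) % t = 0 ∧
        ((i : ℤ) - r).natAbs + ((g - k * ((i : ℤ) - r)) / t).natAbs ≤ r := by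
  constructor
  · rintro ⟨x, y, rfl, hxy⟩
    refine ⟨(x + r).toNat, List.mem_range.2 (by omega), ?_⟩
    rw [show ((x + r).toNat : ℤ) - r = x by omega, add_sub_cancel_left]
    rcases eq_or_ne (t : ℤ) 0 with ht | ht
    · simp [ht]; omega
    · simpa [Int.mul_ediv_cancel_left _ ht] using hxy
  · rintro ⟨i, -, hdvd, hle⟩
    exact ⟨_, _, by rw [Int.mul_ediv_cancel' (Int.dvd_of_emod_eq_zero hdvd)]; ring, hle⟩

instance {k t r : ℕ} {g : ℤ} : Decidable (IsShortCombination k t r g) :=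
  decidable_of_iff _ isShortCombination_iff.symm

section DistanceGraph

variable {k t : ℕ}

theorem distGraph_edist_add_le_one (u : ℤ) {d : ℤ} (hd : d.natAbs = k ∨ d.natAbs = t) :
    (distGraph k t).edist u (u + d) ≤ 1 := by
  refine SimpleGraph.edist_le_one_iff_adj_or_eq.2 ?_
  by_cases h0 : d = 0
  · simp [h0]
  · exact Or.inl ⟨by omega, by rwa [show u - (u + d) = -d by ring, Int.natAbs_neg]⟩

theorem distGraph_edist_add_nsmul_le (u : ℤ) {d : ℤ} (hd : d.natAbs = k ∨ d.natAbs = t)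
    (m : ℕ) : (distGraph k t).edist u (u + m * d) ≤ m := by
  induction m with
  | zero => simp
  | succ m ih =>
    calc (distGraph k t).edist u (u + (m + 1 : ℕ) * d)
        ≤ (distGraph k t).edist u (u + m * d) +
            (distGraph k t).edist (u + m * d) (u + m * d + d) := by
          push_cast; rw [add_one_mul, ← add_assoc]; exact SimpleGraph.edist_triangle
      _ ≤ m + 1 := add_le_add ih (distGraph_edist_add_le_one _ hd)

theorem distGraph_edist_add_mul_le (u : ℤ) {d : ℤ} (hd : d.natAbs = k ∨ d.natAbs = t)
    (x : ℤ) : (distGraph k t).edist u (u + x * d) ≤ x.natAbs := by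
  obtain ⟨m, rfl | rfl⟩ := Int.eq_nat_or_neg x
  · simpa using distGraph_edist_add_nsmul_le u hd m
  · have := distGraph_edist_add_nsmul_le (u + -(m : ℤ) * d) hd m
    rw [neg_mul, neg_add_cancel_right, SimpleGraph.edist_comm] at this
    simpa using this

theorem distGraph_edist_le_of_isShortCombination {r : ℕ} {a b : ℤ}
    (h : IsShortCombination k t r (b - a)) : (distGraph k t).edist a b ≤ r := by
  obtain ⟨x, y, hxy, hr⟩ := h
  calc (distGraph k t).edist a b
      ≤ (distGraph k t).edist a (a + x * k) +
          (distGraph k t).edist (a + x * k) (a + x * k + y * t) := by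
        rw [show a + x * k + y * t = b by linarith]; exact SimpleGraph.edist_triangle
    _ ≤ x.natAbs + y.natAbs := add_le_add (distGraph_edist_add_mul_le _ (by simp) x)
        (distGraph_edist_add_mul_le _ (by simp) y)
    _ ≤ r := by exact_mod_cast hr

theorem IsPackingColoring.not_isShortCombination {p : ℕ} {c : ℤ → ℕ}
    (hc : IsPackingColoring (distGraph k t) p c) {a b : ℤ} (hab : a ≠ b) (hcol : c a = c b) :
    ¬ IsShortCombination k t (c a) (b - a) := fun h =>
  (hc.2 a b hab hcol).not_ge (distGraph_edist_le_of_isShortCombination h)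

theorem IsPackingColoring.not_isShortCombination_sub {p : ℕ} {c : ℤ → ℕ}
    (hc : IsPackingColoring (distGraph k t) p c) {r m n : ℕ} (hmn : m < n) (hm : c m = r)
    (hn : c n = r) : ¬ IsShortCombination k t r (n - m : ℕ) := by
  have := hc.not_isShortCombination (a := m) (b := n) (by omega) (hm.trans hn.symm)
  rwa [hm, ← Nat.cast_sub hmn.le] at this

end DistanceGraph

theorem IsPackingColoring.mono {V : Type*} {G : SimpleGraph V} {p q : ℕ} {c : V → ℕ}
    (hc : IsPackingColoring G p c) (hpq : p ≤ q) : IsPackingColoring G q c :=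
  ⟨fun v => ⟨(hc.1 v).1, (hc.1 v).2.trans hpq⟩, hc.2⟩

theorem Finset.exists_lt_lt_of_two_lt_card {α : Type*} [LinearOrder α] {s : Finset α}
    (hs : 2 < #s) : ∃ x ∈ s, ∃ y ∈ s, ∃ z ∈ s, x < y ∧ y < z := by
  let f := s.orderEmbOfFin rfl
  exact ⟨f ⟨0, by omega⟩, s.orderEmbOfFin_mem rfl _, f ⟨1, hs.trans' one_lt_two⟩,
    s.orderEmbOfFin_mem rfl _, f ⟨2, hs⟩, s.orderEmbOfFin_mem rfl _,
    f.strictMono (by simp [Fin.lt_def]), f.strictMono (by simp [Fin.lt_def])⟩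

theorem Nat.sub_lt_of_div_eq_div {x y ℓ : ℕ} (hℓ : 0 < ℓ) (h : x / ℓ = y / ℓ) : y - x < ℓ := by
  have hx := Nat.div_add_mod x ℓ
  have hy := Nat.div_add_mod y ℓ
  have := Nat.mod_lt y hℓ
  rw [h] at hx
  omega

theorem Finset.card_le_of_card_div_eq_le {S : Finset ℕ} {N ℓ m : ℕ} (hℓ : 0 < ℓ)
    (hS : ∀ x ∈ S, x < N) (hwin : ∀ i, #{x ∈ S | x / ℓ = i} ≤ m) :
    #S ≤ m * ((N + ℓ - 1) / ℓ) := by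
  have hmaps : ∀ x ∈ S, x / ℓ ∈ range ((N + ℓ - 1) / ℓ) := by
    intro x hx
    have := Nat.div_mul_le_self x ℓ
    have := hS x hx
    exact mem_range.2 ((Nat.le_div_iff_mul_le hℓ).2 (by rw [Nat.succ_mul]; omega))
  simpa using card_le_mul_card_image_of_maps_to hmaps m fun i _ => hwin i

def colorClass (c : ℤ → ℕ) (N r : ℕ) : Finset ℕ := {n ∈ range N | c n = r}

theorem IsPackingColoring.sum_card_colorClass {G : SimpleGraph ℤ} {p : ℕ} {c : ℤ → ℕ}
    (hc : IsPackingColoring G p c) (N : ℕ) : ∑ r ∈ Icc 1 p, #(colorClass c N r) = N := by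
  have := card_eq_sum_card_fiberwise (s := range N) (f := fun n : ℕ => c n)
    fun n _ => mem_Icc.2 (hc.1 n)
  rw [card_range] at this
  exact this.symm

namespace IsPackingColoring

variable {k t p : ℕ} {c : ℤ → ℕ}

theorem card_colorClass_le_of_forall_lt (hc : IsPackingColoring (distGraph k t) p c)
    {r ℓ : ℕ} (hℓ : 0 < ℓ) (hgap : ∀ g : ℕ, 0 < g → g < ℓ → IsShortCombination k t r g)
    (N : ℕ) : #(colorClass c N r) ≤ (N + ℓ - 1) / ℓ := by
  refine (card_le_of_card_div_eq_le hℓ (fun x hx => mem_range.1 (mem_filter.1 hx).1)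
    fun i => card_le_one.2 ?_).trans_eq (one_mul _)
  simp only [mem_filter, mem_range]
  rintro x ⟨⟨-, hx⟩, hxi⟩ y ⟨⟨-, hy⟩, hyi⟩
  by_contra hne
  rcases Nat.lt_or_gt_of_ne hne with hxy | hxy
  · exact hc.not_isShortCombination_sub hxy hx hy
      (hgap _ (by omega) (Nat.sub_lt_of_div_eq_div hℓ (hxi.trans hyi.symm)))
  · exact hc.not_isShortCombination_sub hxy hy hx
      (hgap _ (by omega) (Nat.sub_lt_of_div_eq_div hℓ (hyi.trans hxi.symm)))

theorem card_colorClass_le_of_forall_add_lt (hc : IsPackingColoring (distGraph k t) p c)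
    {r ℓ : ℕ} (hℓ : 0 < ℓ)
    (hgap : ∀ g₁ g₂ : ℕ, 0 < g₁ → 0 < g₂ → g₁ + g₂ < ℓ → IsShortCombination k t r g₁ ∨
      IsShortCombination k t r g₂ ∨ IsShortCombination k t r (g₁ + g₂ : ℕ))
    (N : ℕ) : #(colorClass c N r) ≤ 2 * ((N + ℓ - 1) / ℓ) := by
  refine card_le_of_card_div_eq_le hℓ (fun x hx => mem_range.1 (mem_filter.1 hx).1)
    fun i => not_lt.1 fun h3 => ?_
  obtain ⟨x, hx, y, hy, z, hz, hxy, hyz⟩ := exists_lt_lt_of_two_lt_card h3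
  simp only [colorClass, mem_filter, mem_range] at hx hy hz
  have hxz := Nat.sub_lt_of_div_eq_div hℓ (hx.2.trans hz.2.symm)
  rcases hgap (y - x) (z - y) (by omega) (by omega) (by omega) with h | h | h
  · exact hc.not_isShortCombination_sub hxy hx.1.2 hy.1.2 h
  · exact hc.not_isShortCombination_sub hyz hy.1.2 hz.1.2 h
  · refine hc.not_isShortCombination_sub (hxy.trans hyz) hx.1.2 hz.1.2 ?_
    rwa [← Nat.sub_add_sub_cancel hyz.le hxy.le, add_comm]

end IsPackingColoring

def shiftRegister (M : ℕ) (hit : ℕ → Bool) : ℕ → ℕ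
  | 0 => 0
  | n + 1 => shiftRegister M hit n / 2 ||| cond (hit n) M 0

theorem testBit_shiftRegister {M : ℕ} {hit : ℕ → Bool} {n j : ℕ}
    (h : (shiftRegister M hit n).testBit j = true) :
    ∃ m < n, hit m = true ∧ M.testBit (n - 1 - m + j) = true := by
  induction n generalizing j with
  | zero => simp [shiftRegister] at h
  | succ n ih =>
    rw [shiftRegister, Nat.testBit_or, Nat.testBit_div_two, Bool.or_eq_true] at h
    rcases h with h | h
    · obtain ⟨m, hmn, hm, hM⟩ := ih h
      exact ⟨m, by omega, hm, by rwa [show n + 1 - 1 - m + j = n - 1 - m + (j + 1) by omega]⟩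
    · cases hn : hit n
      · simp [hn] at h
      · exact ⟨n, by omega, hn, by simpa [hn] using h⟩

theorem shiftRegister_lt_two_pow {M w : ℕ} (hM : M < 2 ^ w) (hit : ℕ → Bool) (n : ℕ) :
    shiftRegister M hit n < 2 ^ w := by
  induction n with
  | zero => exact Nat.two_pow_pos w
  | succ n ih =>
    exact Nat.or_lt_two_pow ((Nat.div_le_self _ _).trans_lt ih) (by cases hit n <;> simp [hM])

theorem Nat.forall_of_testBit {M w : ℕ} {P : ℕ → Prop} (hM : M < 2 ^ w)
    (h : ∀ j < w, M.testBit j = true → P j) {j : ℕ} (hj : M.testBit j = true) : P j :=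
  h j ((Nat.pow_lt_pow_iff_right (by norm_num)).1 ((Nat.ge_two_pow_of_testBit hj).trans_lt hM))
    hj

theorem IsPackingColoring.testBit_zero_shiftRegister {k t p : ℕ} {c : ℤ → ℕ}
    (hc : IsPackingColoring (distGraph k t) p c) {M r : ℕ}
    (hM : ∀ d, M.testBit d = true → IsShortCombination k t r (d + 1 : ℕ)) {n : ℕ}
    (hn : c n = r) : (shiftRegister M (fun i => c i == r) n).testBit 0 = false := by
  by_contra h
  obtain ⟨m, hmn, hm, hd⟩ := testBit_shiftRegister (Bool.not_eq_false _ ▸ h)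
  refine hc.not_isShortCombination_sub hmn (by simpa using hm) hn ?_
  rw [show n - m = n - 1 - m + 0 + 1 by omega]
  exact hM _ hd

theorem sum_le_of_potential {P : ℕ → Option ℕ} {w : ℕ → ℕ} {a b v₀ : ℕ} (h₀ : P 0 = some v₀)
    (hstep : ∀ n v, P n = some v → ∃ v', P (n + 1) = some v' ∧ a * w n + v' ≤ b + v) (n : ℕ) :
    a * ∑ i ∈ range n, w i ≤ b * n + v₀ := by
  suffices ∃ v, P n = some v ∧ a * ∑ i ∈ range n, w i + v ≤ b * n + v₀ by
    obtain ⟨v, -, hv⟩ := this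
    omega
  induction n with
  | zero => exact ⟨v₀, h₀, by simp⟩
  | succ n ih =>
    obtain ⟨v, hv, hle⟩ := ih
    obtain ⟨v', hv', hle'⟩ := hstep n v hv
    refine ⟨v', hv', ?_⟩
    rw [sum_range_succ, mul_add]
    linarith

inductive NatTree
  | leaf
  | node (l : NatTree) (key val : ℕ) (r : NatTree)

namespace NatTree

def find? : NatTree → ℕ → Option ℕ
  | leaf, _ => none
  | node l k v r, x => if x < k then l.find? x else if k < x then r.find? x else some v

def all (P : ℕ → ℕ → Bool) : NatTree → Bool
  | leaf => true
  | node l k v r => P k v && l.all P && r.all P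

theorem all_of_find? {P : ℕ → ℕ → Bool} {t : NatTree} (ht : t.all P = true) {x v : ℕ}
    (hx : t.find? x = some v) : P x v = true := by
  induction t with
  | leaf => simp [find?] at hx
  | node l k w r ihl ihr =>
    simp only [all, Bool.and_eq_true] at ht
    simp only [find?] at hx
    split_ifs at hx with hlt hgt
    · exact ihl ht.1.2 hx
    · exact ihr ht.2 hx
    · obtain rfl : x = k := by omega
      cases hx
      exact ht.1.1

end NatTree

theorem isShortCombination_4_7_of_lt : ∀ r ∈ Icc 5 15, ∀ g ∈ Ico (1 : ℕ) (7 * r - 8),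
    IsShortCombination 4 7 r g := by
  decide +kernel

theorem isShortCombination_4_7_3_of_add_lt : ∀ g₁ ∈ Ico (1 : ℕ) 19, ∀ g₂ ∈ Ico (1 : ℕ) 19,
    g₁ + g₂ < 19 → IsShortCombination 4 7 3 g₁ ∨ IsShortCombination 4 7 3 g₂ ∨
      IsShortCombination 4 7 3 (g₁ + g₂ : ℕ) := by
  decide +kernel

theorem isShortCombination_4_7_4_of_add_lt : ∀ g₁ ∈ Ico (1 : ℕ) 26, ∀ g₂ ∈ Ico (1 : ℕ) 26,
    g₁ + g₂ < 26 → IsShortCombination 4 7 4 g₁ ∨ IsShortCombination 4 7 4 g₂ ∨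
      IsShortCombination 4 7 4 (g₁ + g₂ : ℕ) := by
  decide +kernel

theorem isShortCombination_4_7_1_of_testBit_72 {d : ℕ} (hd : (72 : ℕ).testBit d = true) :
    IsShortCombination 4 7 1 (d + 1 : ℕ) :=
  Nat.forall_of_testBit (P := fun d => IsShortCombination 4 7 1 (d + 1 : ℕ)) (w := 7)
    (by norm_num) (by decide) hd

theorem isShortCombination_4_7_2_of_testBit_9420 {d : ℕ} (hd : (9420 : ℕ).testBit d = true) :
    IsShortCombination 4 7 2 (d + 1 : ℕ) :=
  Nat.forall_of_testBit (P := fun d => IsShortCombination 4 7 2 (d + 1 : ℕ)) (w := 14)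
    (by norm_num) (by decide) hd

/- A state `s` packs two shift registers: bit `j` of `s % 128` (resp. `s / 128`) says that the
position `j` steps ahead is forbidden for colour 1 (resp. 2). The masks `72 = 2^3 + 2^6` and
`9420 = 2^2 + 2^3 + 2^6 + 2^7 + 2^10 + 2^13` mark the distances `4, 7` and `3, 4, 7, 8, 11, 14`,
which are one, resp. two, steps `±4, ±7` away. -/
def stepKey (s : ℕ) (hit₁ hit₂ : Bool) : ℕ :=
  (s % 128 / 2 ||| cond hit₁ 72 0) + 128 * (s / 128 / 2 ||| cond hit₂ 9420 0)

def potentialStepOk (t : NatTree) (s v : ℕ) (hit₁ hit₂ : Bool) : Bool :=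
  (t.find? (stepKey s hit₁ hit₂)).any fun v' => 22 * (hit₁ || hit₂).toNat + v' ≤ 13 + v

def isCertifiedState (t : NatTree) (s v : ℕ) : Bool :=
  potentialStepOk t s v false false &&
    (s % 2 == 1 || potentialStepOk t s v true false) &&
    (s / 128 % 2 == 1 || potentialStepOk t s v false true)

-- The potential of every state reachable from `0`, keyed as in `stepKey`.
def certificate : NatTree :=
  (.node (.node (.node (.node (.node (.node (.node (.node (.node (.node .leaf 0 63 (.node .leaf 1 63
  .leaf)) 2 63 (.node (.node .leaf 3 63 .leaf) 4 63 (.node .leaf 5 63 .leaf))) 6 63 (.node (.node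
  .leaf 7 63 (.node .leaf 9 50 .leaf)) 11 50 (.node (.node .leaf 13 50 .leaf) 15 50 (.node .leaf 18
  59 .leaf)))) 22 59 (.node (.node (.node .leaf 27 37 (.node .leaf 31 37 .leaf)) 36 51 (.node (.node
  .leaf 37 46 .leaf) 45 46 (.node .leaf 54 46 .leaf))) 63 27 (.node (.node (.node .leaf 72 54 .leaf)
  73 50 (.node .leaf 74 50 .leaf)) 75 50 (.node (.node .leaf 90 42 .leaf) 91 37 (.node .leaf 108 45
  .leaf))))) 109 33 (.node (.node (.node (.node .leaf 126 36 (.node .leaf 127 27 .leaf)) 128 63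
  (.node (.node .leaf 129 50 .leaf) 130 59 (.node .leaf 131 50 .leaf))) 132 59 (.node (.node (.node
  .leaf 133 50 .leaf) 134 59 (.node .leaf 135 50 .leaf)) 137 50 (.node (.node .leaf 139 50 .leaf)
  141 50 (.node .leaf 143 50 .leaf)))) 146 59 (.node (.node (.node .leaf 150 59 (.node .leaf 155 37
  .leaf)) 159 37 (.node (.node .leaf 164 51 .leaf) 165 46 (.node .leaf 173 46 .leaf))) 182 46 (.node
  (.node (.node .leaf 191 24 .leaf) 200 54 (.node .leaf 201 38 .leaf)) 202 42 (.node (.node .leaf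
  203 33 .leaf) 218 42 (.node .leaf 219 33 .leaf)))))) 236 45 (.node (.node (.node (.node (.node
  .leaf 237 33 (.node .leaf 254 36 .leaf)) 255 14 (.node (.node .leaf 256 63 .leaf) 257 63 (.node
  .leaf 258 47 .leaf))) 259 43 (.node (.node .leaf 260 51 (.node .leaf 261 46 .leaf)) 262 42 (.node
  (.node .leaf 263 41 .leaf) 265 50 (.node .leaf 267 37 .leaf)))) 269 46 (.node (.node (.node .leaf
  271 37 (.node .leaf 274 47 .leaf)) 278 42 (.node (.node .leaf 283 37 .leaf) 287 37 (.node .leaf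
  292 51 .leaf))) 293 46 (.node (.node (.node .leaf 301 46 .leaf) 310 42 (.node .leaf 319 24 .leaf))
  328 54 (.node (.node .leaf 329 50 .leaf) 330 42 (.node .leaf 331 33 .leaf))))) 346 42 (.node
  (.node (.node (.node .leaf 347 33 (.node .leaf 364 45 .leaf)) 365 33 (.node (.node .leaf 382 23
  .leaf) 383 11 (.node .leaf 384 63 .leaf))) 385 50 (.node (.node (.node .leaf 386 47 .leaf) 387 37
  (.node .leaf 388 51 .leaf)) 389 46 (.node (.node .leaf 390 42 .leaf) 391 37 (.node .leaf 393 46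
  .leaf)))) 395 37 (.node (.node (.node .leaf 397 46 (.node .leaf 399 37 .leaf)) 402 47 (.node
  (.node .leaf 406 42 .leaf) 411 37 (.node .leaf 415 37 .leaf))) 420 51 (.node (.node (.node .leaf
  421 46 .leaf) 429 46 (.node .leaf 438 42 .leaf)) 447 24 (.node (.node .leaf 456 54 .leaf) 457 38
  (.node .leaf 458 42 .leaf))))))) 459 33 (.node (.node (.node (.node (.node (.node .leaf 474 42
  (.node .leaf 475 33 .leaf)) 492 45 (.node (.node .leaf 493 33 .leaf) 510 23 (.node .leaf 511 11
  .leaf))) 512 63 (.node (.node .leaf 513 63 (.node .leaf 514 63 .leaf)) 515 63 (.node (.node .leaf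
  516 51 .leaf) 517 41 (.node .leaf 518 42 .leaf)))) 519 41 (.node (.node (.node .leaf 521 50 (.node
  .leaf 523 50 .leaf)) 525 33 (.node (.node .leaf 527 28 .leaf) 530 59 (.node .leaf 534 42 .leaf)))
  539 37 (.node (.node (.node .leaf 543 24 .leaf) 548 51 (.node .leaf 549 41 .leaf)) 557 33 (.node
  (.node .leaf 566 42 .leaf) 575 24 (.node .leaf 584 54 .leaf))))) 585 50 (.node (.node (.node
  (.node .leaf 586 50 (.node .leaf 587 50 .leaf)) 602 42 (.node (.node .leaf 603 37 .leaf) 620 33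
  (.node .leaf 621 33 .leaf))) 638 20 (.node (.node (.node .leaf 639 18 .leaf) 640 63 (.node .leaf
  641 50 .leaf)) 642 59 (.node (.node .leaf 643 50 .leaf) 644 51 (.node .leaf 645 34 .leaf)))) 646
  42 (.node (.node (.node .leaf 647 30 (.node .leaf 649 38 .leaf)) 651 33 (.node (.node .leaf 653 29
  .leaf) 655 28 (.node .leaf 658 59 .leaf))) 662 42 (.node (.node (.node .leaf 667 33 .leaf) 671 24
  (.node .leaf 676 51 .leaf)) 677 34 (.node (.node .leaf 685 29 .leaf) 694 42 (.node .leaf 703 24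
  .leaf)))))) 712 54 (.node (.node (.node (.node (.node .leaf 713 38 (.node .leaf 714 42 .leaf)) 715
  33 (.node (.node .leaf 730 42 .leaf) 731 33 (.node .leaf 748 32 .leaf))) 749 29 (.node (.node
  (.node .leaf 766 20 .leaf) 767 11 (.node .leaf 768 63 .leaf)) 769 63 (.node (.node .leaf 770 47
  .leaf) 771 43 (.node .leaf 772 51 .leaf)))) 773 41 (.node (.node (.node .leaf 774 42 (.node .leaf
  775 30 .leaf)) 777 50 (.node (.node .leaf 779 33 .leaf) 781 33 (.node .leaf 783 24 .leaf))) 786 47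
  (.node (.node (.node .leaf 790 42 .leaf) 795 33 (.node .leaf 799 24 .leaf)) 804 51 (.node (.node
  .leaf 805 41 .leaf) 813 33 (.node .leaf 822 42 .leaf))))) 831 24 (.node (.node (.node (.node .leaf
  840 54 (.node .leaf 841 50 .leaf)) 842 42 (.node (.node .leaf 843 33 .leaf) 858 42 (.node .leaf
  859 33 .leaf))) 876 33 (.node (.node (.node .leaf 877 33 .leaf) 894 20 (.node .leaf 895 11 .leaf))
  896 63 (.node (.node .leaf 897 50 .leaf) 898 47 (.node .leaf 899 37 .leaf)))) 900 51 (.node (.node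
  (.node .leaf 901 34 (.node .leaf 902 42 .leaf)) 903 24 (.node (.node .leaf 905 38 .leaf) 907 33
  (.node .leaf 909 29 .leaf))) 911 24 (.node (.node (.node .leaf 914 47 .leaf) 918 42 (.node .leaf
  923 33 .leaf)) 927 24 (.node (.node .leaf 932 51 .leaf) 933 34 (.node .leaf 941 29 .leaf))))))))
  950 42 (.node (.node (.node (.node (.node (.node (.node .leaf 959 24 (.node .leaf 968 54 .leaf))
  969 38 (.node (.node .leaf 970 42 .leaf) 971 33 (.node .leaf 986 42 .leaf))) 987 33 (.node (.node
  .leaf 1004 32 (.node .leaf 1005 29 .leaf)) 1022 20 (.node (.node .leaf 1023 11 .leaf) 1152 63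
  (.node .leaf 1153 50 .leaf)))) 1154 59 (.node (.node (.node .leaf 1155 50 (.node .leaf 1156 59
  .leaf)) 1157 50 (.node (.node .leaf 1158 59 .leaf) 1159 50 (.node .leaf 1161 38 .leaf))) 1163 28
  (.node (.node (.node .leaf 1165 29 .leaf) 1167 28 (.node .leaf 1170 59 .leaf)) 1174 59 (.node
  (.node .leaf 1179 20 .leaf) 1183 15 (.node .leaf 1188 51 .leaf))))) 1189 46 (.node (.node (.node
  (.node .leaf 1197 29 (.node .leaf 1206 46 .leaf)) 1215 11 (.node (.node .leaf 1224 42 .leaf) 1225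
  38 (.node .leaf 1226 42 .leaf))) 1227 28 (.node (.node (.node .leaf 1242 42 .leaf) 1243 20 (.node
  .leaf 1260 29 .leaf)) 1261 29 (.node (.node .leaf 1278 27 .leaf) 1279 11 (.node .leaf 1408 63
  .leaf)))) 1409 50 (.node (.node (.node .leaf 1410 47 (.node .leaf 1411 37 .leaf)) 1412 51 (.node
  (.node .leaf 1413 46 .leaf) 1414 42 (.node .leaf 1415 37 .leaf))) 1417 38 (.node (.node (.node
  .leaf 1419 21 .leaf) 1421 29 (.node .leaf 1423 17 .leaf)) 1426 47 (.node (.node .leaf 1430 42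
  .leaf) 1435 16 (.node .leaf 1439 15 .leaf)))))) 1444 51 (.node (.node (.node (.node (.node .leaf
  1445 46 (.node .leaf 1453 29 .leaf)) 1462 42 (.node (.node .leaf 1471 11 .leaf) 1480 41 (.node
  .leaf 1481 38 .leaf))) 1482 38 (.node (.node .leaf 1483 21 (.node .leaf 1498 38 .leaf)) 1499 16
  (.node (.node .leaf 1516 29 .leaf) 1517 29 (.node .leaf 1534 20 .leaf)))) 1535 11 (.node (.node
  (.node .leaf 1664 63 (.node .leaf 1665 50 .leaf)) 1666 59 (.node (.node .leaf 1667 50 .leaf) 1668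
  51 (.node .leaf 1669 34 .leaf))) 1670 42 (.node (.node (.node .leaf 1671 30 .leaf) 1673 38 (.node
  .leaf 1675 28 .leaf)) 1677 29 (.node (.node .leaf 1679 17 .leaf) 1682 59 (.node .leaf 1686 42
  .leaf))))) 1691 20 (.node (.node (.node (.node .leaf 1695 11 (.node .leaf 1700 51 .leaf)) 1701 34
  (.node (.node .leaf 1709 29 .leaf) 1718 42 (.node .leaf 1727 11 .leaf))) 1736 42 (.node (.node
  (.node .leaf 1737 38 .leaf) 1738 42 (.node .leaf 1739 28 .leaf)) 1754 42 (.node (.node .leaf 1755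
  20 .leaf) 1772 29 (.node .leaf 1773 29 .leaf)))) 1790 20 (.node (.node (.node .leaf 1791 11 (.node
  .leaf 1920 63 .leaf)) 1921 50 (.node (.node .leaf 1922 47 .leaf) 1923 37 (.node .leaf 1924 51
  .leaf))) 1925 34 (.node (.node (.node .leaf 1926 42 .leaf) 1927 24 (.node .leaf 1929 38 .leaf))
  1931 21 (.node (.node .leaf 1933 29 .leaf) 1935 11 (.node .leaf 1938 47 .leaf))))))) 1942 42
  (.node (.node (.node (.node (.node (.node .leaf 1947 16 (.node .leaf 1951 11 .leaf)) 1956 51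
  (.node (.node .leaf 1957 34 .leaf) 1965 29 (.node .leaf 1974 42 .leaf))) 1983 11 (.node (.node
  .leaf 1992 41 (.node .leaf 1993 38 .leaf)) 1994 38 (.node (.node .leaf 1995 21 .leaf) 2010 38
  (.node .leaf 2011 16 .leaf)))) 2028 29 (.node (.node (.node .leaf 2029 29 (.node .leaf 2046 20
  .leaf)) 2047 11 (.node (.node .leaf 2304 63 .leaf) 2305 63 (.node .leaf 2306 47 .leaf))) 2307 43
  (.node (.node (.node .leaf 2308 51 .leaf) 2309 46 (.node .leaf 2310 41 .leaf)) 2311 41 (.node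
  (.node .leaf 2313 50 .leaf) 2315 37 (.node .leaf 2317 46 .leaf))))) 2319 37 (.node (.node (.node
  (.node .leaf 2322 47 (.node .leaf 2326 37 .leaf)) 2331 21 (.node (.node .leaf 2335 15 .leaf) 2340
  51 (.node .leaf 2341 46 .leaf))) 2349 46 (.node (.node (.node .leaf 2358 29 .leaf) 2367 11 (.node
  .leaf 2376 50 .leaf)) 2377 50 (.node (.node .leaf 2378 38 .leaf) 2379 33 (.node .leaf 2394 38
  .leaf)))) 2395 21 (.node (.node (.node .leaf 2412 36 (.node .leaf 2413 33 .leaf)) 2430 20 (.node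
  (.node .leaf 2431 11 .leaf) 2816 63 (.node .leaf 2817 63 .leaf))) 2818 47 (.node (.node (.node
  .leaf 2819 43 .leaf) 2820 47 (.node .leaf 2821 41 .leaf)) 2822 30 (.node (.node .leaf 2823 30
  .leaf) 2825 50 (.node .leaf 2827 33 .leaf)))))) 2829 33 (.node (.node (.node (.node (.node .leaf
  2831 24 (.node .leaf 2834 47 .leaf)) 2838 30 (.node (.node .leaf 2843 21 .leaf) 2847 11 (.node
  .leaf 2852 47 .leaf))) 2853 41 (.node (.node (.node .leaf 2861 33 .leaf) 2870 25 (.node .leaf 2879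
  11 .leaf)) 2888 50 (.node (.node .leaf 2889 50 .leaf) 2890 38 (.node .leaf 2891 33 .leaf)))) 2906
  38 (.node (.node (.node .leaf 2907 21 (.node .leaf 2924 33 .leaf)) 2925 33 (.node (.node .leaf
  2942 20 .leaf) 2943 11 (.node .leaf 3456 51 .leaf))) 3457 50 (.node (.node (.node .leaf 3458 47
  .leaf) 3459 37 (.node .leaf 3460 51 .leaf)) 3461 46 (.node (.node .leaf 3462 37 .leaf) 3463 37
  (.node .leaf 3465 38 .leaf))))) 3467 21 (.node (.node (.node (.node .leaf 3469 29 (.node .leaf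
  3471 17 .leaf)) 3474 47 (.node (.node .leaf 3478 37 .leaf) 3483 16 (.node .leaf 3487 4 .leaf)))
  3492 51 (.node (.node (.node .leaf 3493 46 .leaf) 3501 29 (.node .leaf 3510 29 .leaf)) 3519 0
  (.node (.node .leaf 3528 38 .leaf) 3529 38 (.node .leaf 3530 38 .leaf)))) 3531 21 (.node (.node
  (.node .leaf 3546 38 (.node .leaf 3547 16 .leaf)) 3564 29 (.node (.node .leaf 3565 29 .leaf) 3582
  20 (.node .leaf 3583 0 .leaf))) 3968 50 (.node (.node (.node .leaf 3969 50 .leaf) 3970 47 (.node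
  .leaf 3971 37 .leaf)) 3972 47 (.node (.node .leaf 3973 34 .leaf) 3974 30 (.node .leaf 3975 24
  .leaf))))))))) 3977 38 (.node (.node (.node (.node (.node (.node (.node (.node .leaf 3979 21
  (.node .leaf 3981 29 .leaf)) 3983 11 (.node (.node .leaf 3986 47 .leaf) 3990 30 (.node .leaf 3995
  16 .leaf))) 3999 0 (.node (.node .leaf 4004 47 (.node .leaf 4005 34 .leaf)) 4013 29 (.node (.node
  .leaf 4022 25 .leaf) 4031 0 (.node .leaf 4040 38 .leaf)))) 4041 38 (.node (.node (.node .leaf 4042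
  38 (.node .leaf 4043 21 .leaf)) 4058 38 (.node (.node .leaf 4059 16 .leaf) 4076 29 (.node .leaf
  4077 29 .leaf))) 4094 20 (.node (.node (.node .leaf 4095 0 .leaf) 4608 63 (.node .leaf 4609 63
  .leaf)) 4610 63 (.node (.node .leaf 4611 63 .leaf) 4612 47 (.node .leaf 4613 41 .leaf))))) 4614 42
  (.node (.node (.node (.node .leaf 4615 41 (.node .leaf 4617 50 .leaf)) 4619 50 (.node (.node .leaf
  4621 28 .leaf) 4623 28 (.node .leaf 4626 59 .leaf))) 4630 42 (.node (.node (.node .leaf 4635 37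
  .leaf) 4639 24 (.node .leaf 4644 47 .leaf)) 4645 35 (.node (.node .leaf 4653 24 .leaf) 4662 30
  (.node .leaf 4671 18 .leaf)))) 4680 50 (.node (.node (.node .leaf 4681 50 (.node .leaf 4682 50
  .leaf)) 4683 50 (.node (.node .leaf 4698 42 .leaf) 4699 37 (.node .leaf 4716 29 .leaf))) 4717 23
  (.node (.node (.node .leaf 4734 20 .leaf) 4735 18 (.node .leaf 4736 59 .leaf)) 4737 50 (.node
  (.node .leaf 4738 59 .leaf) 4739 50 (.node .leaf 4740 47 .leaf)))))) 4741 34 (.node (.node (.node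
  (.node (.node .leaf 4742 42 (.node .leaf 4743 30 .leaf)) 4745 38 (.node (.node .leaf 4747 33
  .leaf) 4749 28 (.node .leaf 4751 28 .leaf))) 4754 59 (.node (.node .leaf 4758 42 (.node .leaf 4763
  33 .leaf)) 4767 24 (.node (.node .leaf 4772 47 .leaf) 4773 34 (.node .leaf 4781 24 .leaf)))) 4790
  30 (.node (.node (.node .leaf 4799 2 (.node .leaf 4808 45 .leaf)) 4809 38 (.node (.node .leaf 4810
  42 .leaf) 4811 33 (.node .leaf 4826 42 .leaf))) 4827 33 (.node (.node (.node .leaf 4844 29 .leaf)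
  4845 16 (.node .leaf 4862 20 .leaf)) 4863 0 (.node (.node .leaf 5760 59 .leaf) 5761 50 (.node
  .leaf 5762 59 .leaf))))) 5763 50 (.node (.node (.node (.node .leaf 5764 47 (.node .leaf 5765 34
  .leaf)) 5766 42 (.node (.node .leaf 5767 30 .leaf) 5769 34 (.node .leaf 5771 28 .leaf))) 5773 17
  (.node (.node (.node .leaf 5775 17 .leaf) 5778 59 (.node .leaf 5782 42 .leaf)) 5787 20 (.node
  (.node .leaf 5791 11 .leaf) 5796 47 (.node .leaf 5797 34 .leaf)))) 5805 17 (.node (.node (.node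
  .leaf 5814 30 (.node .leaf 5823 0 .leaf)) 5832 42 (.node (.node .leaf 5833 34 .leaf) 5834 42
  (.node .leaf 5835 28 .leaf))) 5850 42 (.node (.node (.node .leaf 5851 20 .leaf) 5868 29 (.node
  .leaf 5869 12 .leaf)) 5886 20 (.node (.node .leaf 5887 0 .leaf) 6912 47 (.node .leaf 6913 45
  .leaf))))))) 6914 47 (.node (.node (.node (.node (.node (.node .leaf 6915 43 (.node .leaf 6916 47
  .leaf)) 6917 35 (.node (.node .leaf 6918 30 .leaf) 6919 30 (.node .leaf 6921 38 .leaf))) 6923 33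
  (.node (.node .leaf 6925 24 (.node .leaf 6927 24 .leaf)) 6930 47 (.node (.node .leaf 6934 30
  .leaf) 6939 21 (.node .leaf 6943 11 .leaf)))) 6948 47 (.node (.node (.node .leaf 6949 35 (.node
  .leaf 6957 24 .leaf)) 6966 25 (.node (.node .leaf 6975 9 .leaf) 6984 38 (.node .leaf 6985 38
  .leaf))) 6986 38 (.node (.node (.node .leaf 6987 33 .leaf) 7002 38 (.node .leaf 7003 21 .leaf))
  7020 29 (.node (.node .leaf 7021 23 .leaf) 7038 9 (.node .leaf 7039 9 .leaf))))) 8064 47 (.node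
  (.node (.node (.node .leaf 8065 37 (.node .leaf 8066 47 .leaf)) 8067 37 (.node (.node .leaf 8068
  47 .leaf) 8069 34 (.node .leaf 8070 30 .leaf))) 8071 24 (.node (.node (.node .leaf 8073 34 .leaf)
  8075 21 (.node .leaf 8077 17 .leaf)) 8079 11 (.node (.node .leaf 8082 47 .leaf) 8086 30 (.node
  .leaf 8091 16 .leaf)))) 8095 0 (.node (.node (.node .leaf 8100 47 (.node .leaf 8101 34 .leaf))
  8109 17 (.node (.node .leaf 8118 25 .leaf) 8127 0 (.node .leaf 8136 38 .leaf))) 8137 34 (.node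
  (.node (.node .leaf 8138 38 .leaf) 8139 21 (.node .leaf 8154 38 .leaf)) 8155 16 (.node (.node
  .leaf 8172 29 .leaf) 8173 12 (.node .leaf 8190 9 .leaf)))))) 8191 0 (.node (.node (.node (.node
  (.node .leaf 9344 59 (.node .leaf 9345 50 .leaf)) 9346 59 (.node (.node .leaf 9347 50 .leaf) 9348
  59 (.node .leaf 9349 50 .leaf))) 9350 59 (.node (.node (.node .leaf 9351 50 .leaf) 9353 34 (.node
  .leaf 9355 28 .leaf)) 9357 29 (.node (.node .leaf 9359 28 .leaf) 9362 59 (.node .leaf 9366 59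
  .leaf)))) 9371 15 (.node (.node (.node .leaf 9375 15 (.node .leaf 9380 51 .leaf)) 9381 46 (.node
  (.node .leaf 9389 29 .leaf) 9398 46 (.node .leaf 9407 11 .leaf))) 9416 38 (.node (.node (.node
  .leaf 9417 34 .leaf) 9418 32 (.node .leaf 9419 22 .leaf)) 9434 32 (.node (.node .leaf 9435 11
  .leaf) 9452 29 (.node .leaf 9453 17 .leaf))))) 9470 27 (.node (.node (.node (.node .leaf 9471 5
  (.node .leaf 9600 54 .leaf)) 9601 46 (.node (.node .leaf 9602 47 .leaf) 9603 37 (.node .leaf 9604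
  51 .leaf))) 9605 46 (.node (.node (.node .leaf 9606 42 .leaf) 9607 37 (.node .leaf 9609 34 .leaf))
  9611 21 (.node (.node .leaf 9613 29 .leaf) 9615 17 (.node .leaf 9618 47 .leaf)))) 9622 42 (.node
  (.node (.node .leaf 9627 15 (.node .leaf 9631 15 .leaf)) 9636 51 (.node (.node .leaf 9637 46
  .leaf) 9645 29 (.node .leaf 9654 42 .leaf))) 9663 11 (.node (.node (.node .leaf 9672 38 .leaf)
  9673 34 (.node .leaf 9674 25 .leaf)) 9675 21 (.node (.node .leaf 9690 25 .leaf) 9691 11 (.node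
  .leaf 9708 29 .leaf)))))))) 9709 17 (.node (.node (.node (.node (.node (.node (.node .leaf 9726 9
  (.node .leaf 9727 0 .leaf)) 11648 51 (.node (.node .leaf 11649 46 .leaf) 11650 43 (.node .leaf
  11651 37 .leaf))) 11652 51 (.node (.node .leaf 11653 46 (.node .leaf 11654 37 .leaf)) 11655 37
  (.node (.node .leaf 11657 34 .leaf) 11659 21 (.node .leaf 11661 29 .leaf)))) 11663 17 (.node
  (.node (.node .leaf 11666 43 (.node .leaf 11670 37 .leaf)) 11675 4 (.node (.node .leaf 11679 4
  .leaf) 11684 51 (.node .leaf 11685 46 .leaf))) 11693 29 (.node (.node (.node .leaf 11702 29 .leaf)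
  11711 0 (.node .leaf 11720 38 .leaf)) 11721 34 (.node (.node .leaf 11722 21 .leaf) 11723 21 (.node
  .leaf 11738 21 .leaf))))) 11739 4 (.node (.node (.node (.node .leaf 11756 29 (.node .leaf 11757 17
  .leaf)) 11774 9 (.node (.node .leaf 11775 0 .leaf) 13952 47 (.node .leaf 13953 34 .leaf))) 13954
  47 (.node (.node (.node .leaf 13955 32 .leaf) 13956 47 (.node .leaf 13957 34 .leaf)) 13958 42
  (.node (.node .leaf 13959 30 .leaf) 13961 34 (.node .leaf 13963 22 .leaf)))) 13965 17 (.node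
  (.node (.node .leaf 13967 17 (.node .leaf 13970 47 .leaf)) 13974 42 (.node (.node .leaf 13979 11
  .leaf) 13983 11 (.node .leaf 13988 47 .leaf))) 13989 34 (.node (.node (.node .leaf 13997 17 .leaf)
  14006 30 (.node .leaf 14015 0 .leaf)) 14024 38 (.node (.node .leaf 14025 34 .leaf) 14026 32 (.node
  .leaf 14027 22 .leaf)))))) 14042 32 (.node (.node (.node (.node (.node .leaf 14043 11 (.node .leaf
  14060 18 .leaf)) 14061 12 (.node (.node .leaf 14078 18 .leaf) 14079 0 (.node .leaf 16256 47
  .leaf))) 16257 34 (.node (.node .leaf 16258 43 (.node .leaf 16259 24 .leaf)) 16260 47 (.node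
  (.node .leaf 16261 34 .leaf) 16262 30 (.node .leaf 16263 24 .leaf)))) 16265 34 (.node (.node
  (.node .leaf 16267 21 (.node .leaf 16269 17 .leaf)) 16271 11 (.node (.node .leaf 16274 43 .leaf)
  16278 30 (.node .leaf 16283 4 .leaf))) 16287 0 (.node (.node (.node .leaf 16292 47 .leaf) 16293 34
  (.node .leaf 16301 17 .leaf)) 16310 25 (.node (.node .leaf 16319 0 .leaf) 16328 38 (.node .leaf
  16329 34 .leaf))))) 16330 21 (.node (.node (.node (.node .leaf 16331 21 (.node .leaf 16346 21
  .leaf)) 16347 4 (.node (.node .leaf 16364 18 .leaf) 16365 12 (.node .leaf 16382 9 .leaf))) 16383 0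
  (.node (.node (.node .leaf 18816 47 .leaf) 18818 43 (.node .leaf 18820 46 .leaf)) 18822 37 (.node
  (.node .leaf 18825 46 .leaf) 18827 37 (.node .leaf 18829 46 .leaf)))) 18831 37 (.node (.node
  (.node .leaf 18834 43 (.node .leaf 18838 31 .leaf)) 18843 16 (.node (.node .leaf 18847 15 .leaf)
  18852 46 (.node .leaf 18861 46 .leaf))) 18870 20 (.node (.node (.node .leaf 18879 2 .leaf) 18888
  38 (.node .leaf 18889 38 .leaf)) 18890 33 (.node (.node .leaf 18891 33 .leaf) 18906 26 (.node
  .leaf 18907 16 .leaf))))))) 18924 36 (.node (.node (.node (.node (.node (.node .leaf 18925 33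
  (.node .leaf 18942 14 .leaf)) 18943 0 (.node (.node .leaf 19328 47 .leaf) 19330 43 (.node .leaf
  19332 34 .leaf))) 19334 30 (.node (.node .leaf 19337 38 (.node .leaf 19339 33 .leaf)) 19341 29
  (.node (.node .leaf 19343 24 .leaf) 19346 43 (.node .leaf 19350 30 .leaf)))) 19355 16 (.node
  (.node (.node .leaf 19359 4 (.node .leaf 19364 34 .leaf)) 19373 29 (.node (.node .leaf 19382 20
  .leaf) 19391 2 (.node .leaf 19400 38 .leaf))) 19401 38 (.node (.node (.node .leaf 19402 33 .leaf)
  19403 33 (.node .leaf 19418 26 .leaf)) 19419 16 (.node (.node .leaf 19436 29 .leaf) 19437 29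
  (.node .leaf 19454 9 .leaf))))) 19455 0 (.node (.node (.node (.node .leaf 23424 47 (.node .leaf
  23426 43 .leaf)) 23428 30 (.node (.node .leaf 23430 30 .leaf) 23433 38 (.node .leaf 23435 33
  .leaf))) 23437 24 (.node (.node (.node .leaf 23439 24 .leaf) 23442 43 (.node .leaf 23446 30
  .leaf)) 23451 16 (.node (.node .leaf 23455 4 .leaf) 23460 30 (.node .leaf 23469 24 .leaf)))) 23478
  13 (.node (.node (.node .leaf 23487 0 (.node .leaf 23496 38 .leaf)) 23497 38 (.node (.node .leaf
  23498 33 .leaf) 23499 33 (.node .leaf 23514 26 .leaf))) 23515 16 (.node (.node (.node .leaf 23532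
  18 .leaf) 23533 16 (.node .leaf 23550 9 .leaf)) 23551 0 (.node (.node .leaf 28032 47 .leaf) 28034
  43 (.node .leaf 28036 41 .leaf)))))) 28038 31 (.node (.node (.node (.node (.node .leaf 28041 34
  (.node .leaf 28043 21 .leaf)) 28045 29 (.node (.node .leaf 28047 17 .leaf) 28050 43 (.node .leaf
  28054 31 .leaf))) 28059 4 (.node (.node (.node .leaf 28063 4 .leaf) 28068 41 (.node .leaf 28077 29
  .leaf)) 28086 20 (.node (.node .leaf 28095 0 .leaf) 28104 34 (.node .leaf 28105 34 .leaf)))) 28106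
  21 (.node (.node (.node .leaf 28107 21 (.node .leaf 28122 21 .leaf)) 28123 4 (.node (.node .leaf
  28140 27 .leaf) 28141 17 (.node .leaf 28158 9 .leaf))) 28159 0 (.node (.node (.node .leaf 32640 47
  .leaf) 32642 43 (.node .leaf 32644 30 .leaf)) 32646 30 (.node (.node .leaf 32649 34 .leaf) 32651
  21 (.node .leaf 32653 17 .leaf))))) 32655 11 (.node (.node (.node (.node .leaf 32658 43 (.node
  .leaf 32662 30 .leaf)) 32667 4 (.node (.node .leaf 32671 0 .leaf) 32676 30 (.node .leaf 32685 17
  .leaf))) 32694 13 (.node (.node (.node .leaf 32703 0 .leaf) 32712 34 (.node .leaf 32713 34 .leaf))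
  32714 21 (.node (.node .leaf 32715 21 .leaf) 32730 21 (.node .leaf 32731 4 .leaf)))) 32748 18
  (.node (.node (.node .leaf 32749 12 (.node .leaf 32766 9 .leaf)) 32767 0 (.node (.node .leaf 37632
  47 .leaf) 37633 45 (.node .leaf 37636 42 .leaf))) 37637 35 (.node (.node (.node .leaf 37641 33
  .leaf) 37645 24 (.node .leaf 37650 47 .leaf)) 37654 42 (.node (.node .leaf 37659 33 .leaf) 37663
  24 (.node .leaf 37668 35 .leaf)))))))))) 37669 35 (.node (.node (.node (.node (.node (.node (.node
  (.node (.node .leaf 37677 23 (.node .leaf 37686 25 .leaf)) 37695 9 (.node (.node .leaf 37704 45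
  .leaf) 37705 33 (.node .leaf 37722 42 .leaf))) 37723 33 (.node (.node .leaf 37740 23 (.node .leaf
  37741 23 .leaf)) 37758 9 (.node (.node .leaf 37759 9 .leaf) 38784 47 (.node .leaf 38785 34
  .leaf)))) 38788 42 (.node (.node (.node .leaf 38789 30 (.node .leaf 38793 21 .leaf)) 38797 17
  (.node (.node .leaf 38802 47 .leaf) 38806 42 (.node .leaf 38811 16 .leaf))) 38815 11 (.node (.node
  (.node .leaf 38820 35 .leaf) 38821 30 (.node .leaf 38829 17 .leaf)) 38838 25 (.node (.node .leaf
  38847 0 .leaf) 38856 38 (.node .leaf 38857 21 .leaf))))) 38874 38 (.node (.node (.node (.node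
  .leaf 38875 16 (.node .leaf 38892 18 .leaf)) 38893 7 (.node (.node .leaf 38910 9 .leaf) 38911 0
  (.node .leaf 46976 47 .leaf))) 46977 34 (.node (.node (.node .leaf 46980 42 .leaf) 46981 30 (.node
  .leaf 46985 17 .leaf)) 46989 17 (.node (.node .leaf 46994 47 .leaf) 46998 42 (.node .leaf 47003 11
  .leaf)))) 47007 11 (.node (.node (.node .leaf 47012 35 (.node .leaf 47013 30 .leaf)) 47021 17
  (.node (.node .leaf 47030 25 .leaf) 47039 0 (.node .leaf 47048 27 .leaf))) 47049 17 (.node (.node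
  (.node .leaf 47066 25 .leaf) 47067 11 (.node .leaf 47084 18 .leaf)) 47085 0 (.node (.node .leaf
  47102 9 .leaf) 47103 0 (.node .leaf 56192 43 .leaf)))))) 56196 30 (.node (.node (.node (.node
  (.node .leaf 56201 28 (.node .leaf 56205 18 .leaf)) 56210 43 (.node (.node .leaf 56214 30 .leaf)
  56219 16 (.node .leaf 56223 4 .leaf))) 56228 30 (.node (.node .leaf 56237 18 (.node .leaf 56246 13
  .leaf)) 56255 0 (.node (.node .leaf 56264 36 .leaf) 56265 28 (.node .leaf 56282 26 .leaf)))) 56283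
  16 (.node (.node (.node .leaf 56300 18 (.node .leaf 56301 7 .leaf)) 56318 9 (.node (.node .leaf
  56319 0 .leaf) 65408 43 (.node .leaf 65412 30 .leaf))) 65417 17 (.node (.node (.node .leaf 65421
  17 .leaf) 65426 43 (.node .leaf 65430 30 .leaf)) 65435 4 (.node (.node .leaf 65439 0 .leaf) 65444
  30 (.node .leaf 65453 17 .leaf))))) 65462 13 (.node (.node (.node (.node .leaf 65471 0 (.node
  .leaf 65480 27 .leaf)) 65481 17 (.node (.node .leaf 65498 21 .leaf) 65499 4 (.node .leaf 65516 18
  .leaf))) 65517 0 (.node (.node (.node .leaf 65534 9 .leaf) 65535 0 (.node .leaf 75264 54 .leaf))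
  75265 54 (.node (.node .leaf 75266 54 .leaf) 75267 54 (.node .leaf 75273 33 .leaf)))) 75275 32
  (.node (.node (.node .leaf 75282 42 (.node .leaf 75291 27 .leaf)) 75300 51 (.node (.node .leaf
  75301 41 .leaf) 75309 33 (.node .leaf 75318 42 .leaf))) 75327 18 (.node (.node (.node .leaf 75336
  32 .leaf) 75337 32 (.node .leaf 75338 32 .leaf)) 75339 32 (.node (.node .leaf 75354 32 .leaf)
  75355 27 (.node .leaf 75372 18 .leaf))))))) 75373 18 (.node (.node (.node (.node (.node (.node
  .leaf 75390 18 (.node .leaf 75391 18 .leaf)) 75392 54 (.node (.node .leaf 75393 34 .leaf) 75394 42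
  (.node .leaf 75395 32 .leaf))) 75401 29 (.node (.node .leaf 75403 22 (.node .leaf 75410 42 .leaf))
  75419 11 (.node (.node .leaf 75428 51 .leaf) 75429 34 (.node .leaf 75437 29 .leaf)))) 75446 42
  (.node (.node (.node .leaf 75455 11 (.node .leaf 75464 32 .leaf)) 75465 22 (.node (.node .leaf
  75466 32 .leaf) 75467 22 (.node .leaf 75482 32 .leaf))) 75483 10 (.node (.node (.node .leaf 75500
  18 .leaf) 75501 12 (.node .leaf 75518 18 .leaf)) 75519 0 (.node (.node .leaf 77568 54 .leaf) 77569
  54 (.node .leaf 77570 32 .leaf))))) 77571 32 (.node (.node (.node (.node .leaf 77577 33 (.node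
  .leaf 77579 17 .leaf)) 77586 30 (.node (.node .leaf 77595 11 .leaf) 77604 47 (.node .leaf 77605 41
  .leaf))) 77613 33 (.node (.node (.node .leaf 77622 25 .leaf) 77631 11 (.node .leaf 77640 32
  .leaf)) 77641 32 (.node (.node .leaf 77642 17 .leaf) 77643 17 (.node .leaf 77658 16 .leaf))))
  77659 9 (.node (.node (.node .leaf 77676 18 (.node .leaf 77677 18 .leaf)) 77694 9 (.node (.node
  .leaf 77695 9 .leaf) 77696 47 (.node .leaf 77697 34 .leaf))) 77698 30 (.node (.node (.node .leaf
  77699 21 .leaf) 77705 29 (.node .leaf 77707 17 .leaf)) 77714 30 (.node (.node .leaf 77723 4 .leaf)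
  77732 47 (.node .leaf 77733 34 .leaf)))))) 77741 29 (.node (.node (.node (.node (.node .leaf 77750
  25 (.node .leaf 77759 0 .leaf)) 77768 27 (.node (.node .leaf 77769 22 .leaf) 77770 17 (.node .leaf
  77771 17 .leaf))) 77786 16 (.node (.node (.node .leaf 77787 4 .leaf) 77804 18 (.node .leaf 77805
  12 .leaf)) 77822 9 (.node (.node .leaf 77823 0 .leaf) 94080 36 (.node .leaf 94082 26 .leaf))))
  94089 29 (.node (.node (.node .leaf 94091 17 (.node .leaf 94098 26 .leaf)) 94107 4 (.node (.node
  .leaf 94116 34 .leaf) 94125 29 (.node .leaf 94134 20 .leaf))) 94143 0 (.node (.node (.node .leaf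
  94152 27 .leaf) 94153 22 (.node .leaf 94154 17 .leaf)) 94155 17 (.node (.node .leaf 94170 9 .leaf)
  94171 4 (.node .leaf 94188 18 .leaf))))) 94189 12 (.node (.node (.node (.node .leaf 94206 9 (.node
  .leaf 94207 0 .leaf)) 112384 45 (.node (.node .leaf 112385 45 .leaf) 112393 27 (.node .leaf 112402
  37 .leaf))) 112411 9 (.node (.node (.node .leaf 112420 35 .leaf) 112421 35 (.node .leaf 112429 23
  .leaf)) 112438 25 (.node (.node .leaf 112447 9 .leaf) 112456 27 (.node .leaf 112457 27 .leaf))))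
  112474 16 (.node (.node (.node .leaf 112475 9 (.node .leaf 112492 18 .leaf)) 112493 18 (.node
  (.node .leaf 112510 9 .leaf) 112511 9 (.node .leaf 112512 45 .leaf))) 112513 30 (.node (.node
  (.node .leaf 112521 17 .leaf) 112530 37 (.node .leaf 112539 5 .leaf)) 112548 35 (.node (.node
  .leaf 112549 30 .leaf) 112557 17 (.node .leaf 112566 25 .leaf)))))))) 112575 0 (.node (.node
  (.node (.node (.node (.node (.node .leaf 112584 27 (.node .leaf 112585 17 .leaf)) 112602 16 (.node
  (.node .leaf 112603 5 .leaf) 112620 18 (.node .leaf 112621 0 .leaf))) 112638 9 (.node (.node .leaf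
  112639 0 (.node .leaf 130944 36 .leaf)) 130953 17 (.node (.node .leaf 130962 26 .leaf) 130971 4
  (.node .leaf 130980 30 .leaf)))) 130989 17 (.node (.node (.node .leaf 130998 13 (.node .leaf
  131007 0 .leaf)) 131016 27 (.node (.node .leaf 131017 17 .leaf) 131034 9 (.node .leaf 131035 4
  .leaf))) 131052 18 (.node (.node (.node .leaf 131053 0 .leaf) 131070 9 (.node .leaf 131071 0
  .leaf)) 150656 41 (.node (.node .leaf 150657 41 .leaf) 150658 41 (.node .leaf 150659 41 .leaf)))))
  150660 41 (.node (.node (.node (.node .leaf 150661 41 (.node .leaf 150662 41 .leaf)) 150663 41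
  (.node (.node .leaf 150674 41 .leaf) 150678 41 (.node .leaf 150692 41 .leaf))) 150693 29 (.node
  (.node (.node .leaf 150710 36 .leaf) 150728 38 (.node .leaf 150729 38 .leaf)) 150730 28 (.node
  (.node .leaf 150731 28 .leaf) 150746 27 (.node .leaf 150764 29 .leaf)))) 150765 29 (.node (.node
  (.node .leaf 150782 27 (.node .leaf 150912 41 .leaf)) 150913 41 (.node (.node .leaf 150914 31
  .leaf) 150915 21 (.node .leaf 150916 41 .leaf))) 150917 29 (.node (.node (.node .leaf 150918 31
  .leaf) 150919 19 (.node .leaf 150930 31 .leaf)) 150934 31 (.node (.node .leaf 150948 41 .leaf)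
  150949 29 (.node .leaf 150966 19 .leaf)))))) 150984 38 (.node (.node (.node (.node (.node .leaf
  150985 38 (.node .leaf 150986 21 .leaf)) 150987 21 (.node (.node .leaf 151002 21 .leaf) 151020 29
  (.node .leaf 151021 29 .leaf))) 151038 9 (.node (.node .leaf 155264 41 (.node .leaf 155265 41
  .leaf)) 155266 41 (.node (.node .leaf 155267 41 .leaf) 155268 26 (.node .leaf 155269 19 .leaf))))
  155270 26 (.node (.node (.node .leaf 155271 19 (.node .leaf 155282 41 .leaf)) 155286 26 (.node
  (.node .leaf 155300 25 .leaf) 155301 17 (.node .leaf 155318 18 .leaf))) 155336 34 (.node (.node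
  (.node .leaf 155337 34 .leaf) 155338 28 (.node .leaf 155339 28 .leaf)) 155354 27 (.node (.node
  .leaf 155372 18 .leaf) 155373 12 (.node .leaf 155390 18 .leaf))))) 155520 36 (.node (.node (.node
  (.node .leaf 155521 34 (.node .leaf 155522 31 .leaf)) 155523 21 (.node (.node .leaf 155524 26
  .leaf) 155525 17 (.node .leaf 155526 26 .leaf))) 155527 8 (.node (.node (.node .leaf 155538 31
  .leaf) 155542 26 (.node .leaf 155556 25 .leaf)) 155557 17 (.node (.node .leaf 155574 13 .leaf)
  155592 34 (.node .leaf 155593 34 .leaf)))) 155594 21 (.node (.node (.node .leaf 155595 21 (.node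
  .leaf 155610 21 .leaf)) 155628 18 (.node (.node .leaf 155629 12 .leaf) 155646 9 (.node .leaf
  188288 36 .leaf))) 188289 23 (.node (.node (.node .leaf 188292 26 .leaf) 188293 13 (.node .leaf
  188306 31 .leaf)) 188310 26 (.node (.node .leaf 188324 18 .leaf) 188325 13 (.node .leaf 188342 13
  .leaf))))))) 188360 27 (.node (.node (.node (.node (.node (.node .leaf 188361 21 (.node .leaf
  188378 21 .leaf)) 188396 18 (.node (.node .leaf 188397 7 .leaf) 188414 9 (.node .leaf 224896 36
  .leaf))) 224897 32 (.node (.node .leaf 224898 36 (.node .leaf 224899 32 .leaf)) 224914 36 (.node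
  (.node .leaf 224932 25 .leaf) 224933 24 (.node .leaf 224950 18 .leaf)))) 224968 27 (.node (.node
  (.node .leaf 224969 22 (.node .leaf 224970 27 .leaf)) 224971 22 (.node (.node .leaf 224986 27
  .leaf) 225004 18 (.node .leaf 225005 12 .leaf))) 225022 18 (.node (.node (.node .leaf 225152 36
  .leaf) 225153 32 (.node .leaf 225154 26 .leaf)) 225155 17 (.node (.node .leaf 225170 26 .leaf)
  225188 25 (.node .leaf 225189 24 .leaf))))) 225206 14 (.node (.node (.node (.node .leaf 225224 27
  (.node .leaf 225225 22 .leaf)) 225226 17 (.node (.node .leaf 225227 17 .leaf) 225242 9 (.node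
  .leaf 225260 18 .leaf))) 225261 12 (.node (.node (.node .leaf 225278 9 .leaf) 262016 36 (.node
  .leaf 262017 23 .leaf)) 262034 26 (.node (.node .leaf 262052 18 .leaf) 262053 13 (.node .leaf
  262070 13 .leaf)))) 262088 27 (.node (.node (.node .leaf 262089 17 (.node .leaf 262106 9 .leaf))
  262124 18 (.node (.node .leaf 262125 0 .leaf) 262142 9 (.node .leaf 301440 47 .leaf))) 301441 28
  (.node (.node (.node .leaf 301442 47 .leaf) 301443 28 (.node .leaf 301444 37 .leaf)) 301445 28
  (.node (.node .leaf 301446 37 .leaf) 301447 28 (.node .leaf 301449 28 .leaf)))))) 301451 28 (.node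
  (.node (.node (.node (.node .leaf 301453 28 (.node .leaf 301455 28 .leaf)) 301476 36 (.node (.node
  .leaf 301477 28 .leaf) 301485 28 (.node .leaf 301512 38 .leaf))) 301513 28 (.node (.node (.node
  .leaf 301514 38 .leaf) 301515 16 (.node .leaf 301548 36 .leaf)) 301549 23 (.node (.node .leaf
  301952 47 .leaf) 301953 28 (.node .leaf 301954 47 .leaf)))) 301955 28 (.node (.node (.node .leaf
  301956 30 (.node .leaf 301957 18 .leaf)) 301958 30 (.node (.node .leaf 301959 8 .leaf) 301961 28
  (.node .leaf 301963 16 .leaf))) 301965 18 (.node (.node (.node .leaf 301967 6 .leaf) 301988 30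
  (.node .leaf 301989 18 .leaf)) 301997 18 (.node (.node .leaf 302024 38 .leaf) 302025 28 (.node
  .leaf 302026 38 .leaf))))) 302027 16 (.node (.node (.node (.node .leaf 302060 18 (.node .leaf
  302061 6 .leaf)) 310656 43 (.node (.node .leaf 310657 28 .leaf) 310658 43 (.node .leaf 310659 28
  .leaf))) 310660 37 (.node (.node (.node .leaf 310661 28 .leaf) 310662 37 (.node .leaf 310663 28
  .leaf)) 310665 13 (.node (.node .leaf 310667 6 .leaf) 310669 13 (.node .leaf 310671 6 .leaf))))
  310692 36 (.node (.node (.node .leaf 310693 28 (.node .leaf 310701 13 .leaf)) 310728 27 (.node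
  (.node .leaf 310729 12 .leaf) 310730 21 (.node .leaf 310731 4 .leaf))) 310764 27 (.node (.node
  (.node .leaf 310765 5 .leaf) 311168 43 (.node .leaf 311169 23 .leaf)) 311170 43 (.node (.node
  .leaf 311171 21 .leaf) 311172 30 (.node .leaf 311173 18 .leaf))))))))) 311174 30 (.node (.node
  (.node (.node (.node (.node (.node (.node .leaf 311175 8 (.node .leaf 311177 13 .leaf)) 311179 4
  (.node (.node .leaf 311181 13 .leaf) 311183 0 (.node .leaf 311204 30 .leaf))) 311205 18 (.node
  (.node .leaf 311213 13 (.node .leaf 311240 27 .leaf)) 311241 12 (.node (.node .leaf 311242 21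
  .leaf) 311243 4 (.node .leaf 311276 18 .leaf)))) 311277 0 (.node (.node (.node .leaf 376704 36
  (.node .leaf 376705 23 .leaf)) 376706 30 (.node (.node .leaf 376707 10 .leaf) 376713 13 (.node
  .leaf 376715 0 .leaf))) 376740 30 (.node (.node (.node .leaf 376741 18 .leaf) 376749 13 (.node
  .leaf 376776 27 .leaf)) 376777 5 (.node (.node .leaf 376778 16 .leaf) 376779 0 (.node .leaf 376812
  18 .leaf))))) 376813 0 (.node (.node (.node (.node .leaf 449920 36 (.node .leaf 449921 23 .leaf))
  449922 31 (.node (.node .leaf 449923 19 .leaf) 449924 36 (.node .leaf 449925 23 .leaf))) 449926 31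
  (.node (.node (.node .leaf 449927 19 .leaf) 449956 36 (.node .leaf 449957 23 .leaf)) 449992 27
  (.node (.node .leaf 449993 12 .leaf) 449994 21 (.node .leaf 449995 11 .leaf)))) 450028 27 (.node
  (.node (.node .leaf 450029 5 (.node .leaf 450432 36 .leaf)) 450433 23 (.node (.node .leaf 450434
  31 .leaf) 450435 19 (.node .leaf 450436 26 .leaf))) 450437 13 (.node (.node (.node .leaf 450438 26
  .leaf) 450439 4 (.node .leaf 450468 18 .leaf)) 450469 13 (.node (.node .leaf 450504 27 .leaf)
  450505 12 (.node .leaf 450506 21 .leaf)))))) 450507 11 (.node (.node (.node (.node (.node .leaf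
  450540 18 (.node .leaf 450541 1 .leaf)) 524160 36 (.node (.node .leaf 524161 23 .leaf) 524162 26
  (.node .leaf 524163 10 .leaf))) 524196 18 (.node (.node .leaf 524197 13 (.node .leaf 524232 27
  .leaf)) 524233 5 (.node (.node .leaf 524234 9 .leaf) 524235 0 (.node .leaf 524268 18 .leaf))))
  524269 0 (.node (.node (.node .leaf 602880 47 (.node .leaf 602881 45 .leaf)) 602882 37 (.node
  (.node .leaf 602883 32 .leaf) 602884 47 (.node .leaf 602885 35 .leaf))) 602886 25 (.node (.node
  (.node .leaf 602887 19 .leaf) 602889 27 (.node .leaf 602891 15 .leaf)) 602893 24 (.node (.node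
  .leaf 602895 15 .leaf) 602898 37 (.node .leaf 602902 25 .leaf))))) 602907 15 (.node (.node (.node
  (.node .leaf 602911 15 (.node .leaf 602952 45 .leaf)) 602953 27 (.node (.node .leaf 602954 32
  .leaf) 602955 15 (.node .leaf 602970 32 .leaf))) 602971 15 (.node (.node (.node .leaf 603008 47
  .leaf) 603009 34 (.node .leaf 603010 37 .leaf)) 603011 15 (.node (.node .leaf 603012 47 .leaf)
  603013 34 (.node .leaf 603014 25 .leaf)))) 603015 15 (.node (.node (.node .leaf 603017 24 (.node
  .leaf 603019 15 .leaf)) 603021 24 (.node (.node .leaf 603023 15 .leaf) 603026 37 (.node .leaf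
  603030 25 .leaf))) 603035 15 (.node (.node (.node .leaf 603039 15 .leaf) 603080 45 (.node .leaf
  603081 23 .leaf)) 603082 32 (.node (.node .leaf 603083 15 .leaf) 603098 32 (.node .leaf 603099 15
  .leaf))))))) 604032 47 (.node (.node (.node (.node (.node (.node .leaf 604033 34 (.node .leaf
  604034 37 .leaf)) 604035 15 (.node (.node .leaf 604036 47 .leaf) 604037 34 (.node .leaf 604038 25
  .leaf))) 604039 15 (.node (.node .leaf 604041 17 (.node .leaf 604043 5 .leaf)) 604045 17 (.node
  (.node .leaf 604047 0 .leaf) 604050 37 (.node .leaf 604054 25 .leaf)))) 604059 5 (.node (.node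
  (.node .leaf 604063 0 (.node .leaf 604104 27 .leaf)) 604105 17 (.node (.node .leaf 604106 15
  .leaf) 604107 5 (.node .leaf 604122 15 .leaf))) 604123 5 (.node (.node (.node .leaf 621440 36
  .leaf) 621442 21 (.node .leaf 621444 30 .leaf)) 621446 15 (.node (.node .leaf 621449 24 .leaf)
  621451 15 (.node .leaf 621453 24 .leaf))))) 621455 15 (.node (.node (.node (.node .leaf 621458 21
  (.node .leaf 621462 13 .leaf)) 621467 0 (.node (.node .leaf 621471 0 .leaf) 621512 36 (.node .leaf
  621513 23 .leaf))) 621514 15 (.node (.node (.node .leaf 621515 15 .leaf) 621530 14 (.node .leaf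
  621531 0 .leaf)) 622464 36 (.node (.node .leaf 622466 21 .leaf) 622468 30 (.node .leaf 622470 13
  .leaf)))) 622473 17 (.node (.node (.node .leaf 622475 5 (.node .leaf 622477 17 .leaf)) 622479 0
  (.node (.node .leaf 622482 21 .leaf) 622486 13 (.node .leaf 622491 0 .leaf))) 622495 0 (.node
  (.node (.node .leaf 622536 27 .leaf) 622537 17 (.node .leaf 622538 9 .leaf)) 622539 5 (.node
  (.node .leaf 622554 9 .leaf) 622555 0 (.node .leaf 753536 36 .leaf)))))) 753537 23 (.node (.node
  (.node (.node (.node .leaf 753538 14 (.node .leaf 753539 10 .leaf)) 753540 25 (.node (.node .leaf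
  753541 17 .leaf) 753542 9 (.node .leaf 753543 0 .leaf))) 753554 14 (.node (.node (.node .leaf
  753558 9 .leaf) 753608 27 (.node .leaf 753609 17 .leaf)) 753610 9 (.node (.node .leaf 753611 5
  .leaf) 753626 9 (.node .leaf 899968 36 .leaf)))) 899969 23 (.node (.node (.node .leaf 899970 21
  (.node .leaf 899971 10 .leaf)) 899972 30 (.node (.node .leaf 899973 18 .leaf) 899974 20 (.node
  .leaf 899975 6 .leaf))) 899977 23 (.node (.node (.node .leaf 899979 10 .leaf) 899981 18 (.node
  .leaf 899983 6 .leaf)) 900040 36 (.node (.node .leaf 900041 23 .leaf) 900042 14 (.node .leaf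
  900043 10 .leaf))))) 900992 36 (.node (.node (.node (.node .leaf 900993 23 (.node .leaf 900994 21
  .leaf)) 900995 10 (.node (.node .leaf 900996 30 .leaf) 900997 18 (.node .leaf 900998 20 .leaf)))
  900999 6 (.node (.node (.node .leaf 901001 13 .leaf) 901003 0 (.node .leaf 901005 13 .leaf))
  901007 0 (.node (.node .leaf 901064 27 .leaf) 901065 5 (.node .leaf 901066 10 .leaf)))) 901067 0
  (.node (.node (.node .leaf 1048448 36 (.node .leaf 1048449 23 .leaf)) 1048450 14 (.node (.node
  .leaf 1048451 10 .leaf) 1048452 18 (.node .leaf 1048453 13 .leaf))) 1048454 9 (.node (.node (.node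
  .leaf 1048455 0 .leaf) 1048520 27 (.node .leaf 1048521 5 .leaf)) 1048522 9 (.node (.node .leaf
  1048523 0 .leaf) 1205760 54 (.node .leaf 1205761 54 .leaf)))))))) 1205762 54 (.node (.node (.node
  (.node (.node (.node (.node .leaf 1205763 54 (.node .leaf 1205764 41 .leaf)) 1205765 41 (.node
  (.node .leaf 1205766 41 .leaf) 1205767 41 (.node .leaf 1205769 34 .leaf))) 1205771 32 (.node
  (.node .leaf 1205773 28 (.node .leaf 1205775 28 .leaf)) 1205778 36 (.node (.node .leaf 1205782 24
  .leaf) 1205787 27 (.node .leaf 1205791 18 .leaf)))) 1205796 41 (.node (.node (.node .leaf 1205797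
  41 (.node .leaf 1205805 28 .leaf)) 1205814 24 (.node (.node .leaf 1205823 18 .leaf) 1205888 54
  (.node .leaf 1205889 34 .leaf))) 1205890 36 (.node (.node (.node .leaf 1205891 32 .leaf) 1205892
  41 (.node .leaf 1205893 24 .leaf)) 1205894 24 (.node (.node .leaf 1205895 19 .leaf) 1205897 34
  (.node .leaf 1205899 22 .leaf))))) 1205901 12 (.node (.node (.node (.node .leaf 1205903 6 (.node
  .leaf 1205906 36 .leaf)) 1205910 24 (.node (.node .leaf 1205915 11 .leaf) 1205919 2 (.node .leaf
  1205924 41 .leaf))) 1205925 24 (.node (.node (.node .leaf 1205933 12 .leaf) 1205942 24 (.node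
  .leaf 1205951 2 .leaf)) 1206016 54 (.node (.node .leaf 1206017 54 .leaf) 1206018 32 (.node .leaf
  1206019 32 .leaf)))) 1206020 41 (.node (.node (.node .leaf 1206021 41 (.node .leaf 1206022 24
  .leaf)) 1206023 19 (.node (.node .leaf 1206025 34 .leaf) 1206027 21 (.node .leaf 1206029 28
  .leaf))) 1206031 9 (.node (.node (.node .leaf 1206034 32 .leaf) 1206038 24 (.node .leaf 1206043 16
  .leaf)) 1206047 9 (.node (.node .leaf 1206052 41 .leaf) 1206053 41 (.node .leaf 1206061 28
  .leaf)))))) 1206070 24 (.node (.node (.node (.node (.node .leaf 1206079 9 (.node .leaf 1206144 54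
  .leaf)) 1206145 34 (.node (.node .leaf 1206146 32 .leaf) 1206147 21 (.node .leaf 1206148 41
  .leaf))) 1206149 24 (.node (.node .leaf 1206150 24 (.node .leaf 1206151 2 .leaf)) 1206153 34
  (.node (.node .leaf 1206155 21 .leaf) 1206157 12 (.node .leaf 1206159 2 .leaf)))) 1206162 32
  (.node (.node (.node .leaf 1206166 24 (.node .leaf 1206171 11 .leaf)) 1206175 2 (.node (.node
  .leaf 1206180 41 .leaf) 1206181 24 (.node .leaf 1206189 12 .leaf))) 1206198 24 (.node (.node
  (.node .leaf 1206207 2 .leaf) 1208064 54 (.node .leaf 1208065 54 .leaf)) 1208066 32 (.node (.node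
  .leaf 1208067 32 .leaf) 1208068 41 (.node .leaf 1208069 41 .leaf))))) 1208070 19 (.node (.node
  (.node (.node .leaf 1208071 19 (.node .leaf 1208073 34 .leaf)) 1208075 21 (.node (.node .leaf
  1208077 28 .leaf) 1208079 9 (.node .leaf 1208082 26 .leaf))) 1208086 14 (.node (.node (.node .leaf
  1208091 16 .leaf) 1208095 9 (.node .leaf 1208100 41 .leaf)) 1208101 41 (.node (.node .leaf 1208109
  28 .leaf) 1208118 14 (.node .leaf 1208127 9 .leaf)))) 1208192 36 (.node (.node (.node .leaf
  1208193 34 (.node .leaf 1208194 26 .leaf)) 1208195 21 (.node (.node .leaf 1208196 24 .leaf)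
  1208197 24 (.node .leaf 1208198 14 .leaf))) 1208199 2 (.node (.node (.node .leaf 1208201 34 .leaf)
  1208203 21 (.node .leaf 1208205 12 .leaf)) 1208207 2 (.node (.node .leaf 1208210 26 .leaf) 1208214
  14 (.node .leaf 1208219 4 .leaf))))))) 1208223 0 (.node (.node (.node (.node (.node (.node .leaf
  1208228 24 (.node .leaf 1208229 24 .leaf)) 1208237 12 (.node (.node .leaf 1208246 14 .leaf)
  1208255 0 (.node .leaf 1242880 45 .leaf))) 1242881 45 (.node (.node .leaf 1242884 24 (.node .leaf
  1242885 23 .leaf)) 1242889 28 (.node (.node .leaf 1242893 18 .leaf) 1242898 32 (.node .leaf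
  1242902 24 .leaf)))) 1242907 16 (.node (.node (.node .leaf 1242911 9 (.node .leaf 1242916 23
  .leaf)) 1242917 23 (.node (.node .leaf 1242925 18 .leaf) 1242934 9 (.node .leaf 1242943 9 .leaf)))
  1243008 45 (.node (.node (.node .leaf 1243009 23 .leaf) 1243012 24 (.node .leaf 1243013 8 .leaf))
  1243017 17 (.node (.node .leaf 1243021 2 .leaf) 1243026 32 (.node .leaf 1243030 24 .leaf)))))
  1243035 11 (.node (.node (.node (.node .leaf 1243039 2 (.node .leaf 1243044 23 .leaf)) 1243045 8
  (.node (.node .leaf 1243053 0 .leaf) 1243062 9 (.node .leaf 1243071 0 .leaf))) 1245056 36 (.node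
  (.node (.node .leaf 1245060 18 .leaf) 1245065 17 (.node .leaf 1245069 0 .leaf)) 1245074 26 (.node
  (.node .leaf 1245078 14 .leaf) 1245083 4 (.node .leaf 1245087 0 .leaf)))) 1245092 18 (.node (.node
  (.node .leaf 1245101 0 (.node .leaf 1245110 9 .leaf)) 1245119 0 (.node (.node .leaf 1507200 36
  .leaf) 1507201 23 (.node .leaf 1507202 26 .leaf))) 1507203 10 (.node (.node (.node .leaf 1507204
  18 .leaf) 1507205 1 (.node .leaf 1507206 14 .leaf)) 1507207 0 (.node (.node .leaf 1507209 12
  .leaf) 1507211 4 (.node .leaf 1507213 0 .leaf)))))) 1507215 0 (.node (.node (.node (.node (.node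
  .leaf 1507236 18 (.node .leaf 1507237 1 .leaf)) 1507245 0 (.node (.node .leaf 1799936 45 .leaf)
  1799937 45 (.node .leaf 1799938 32 .leaf))) 1799939 32 (.node (.node (.node .leaf 1799940 23
  .leaf) 1799941 23 (.node .leaf 1799942 19 .leaf)) 1799943 19 (.node (.node .leaf 1799945 27 .leaf)
  1799947 10 (.node .leaf 1799949 18 .leaf)))) 1799951 9 (.node (.node (.node .leaf 1799954 32
  (.node .leaf 1799958 19 .leaf)) 1799963 9 (.node (.node .leaf 1799967 9 .leaf) 1800064 45 (.node
  .leaf 1800065 23 .leaf))) 1800066 32 (.node (.node (.node .leaf 1800067 10 .leaf) 1800068 23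
  (.node .leaf 1800069 8 .leaf)) 1800070 19 (.node (.node .leaf 1800071 0 .leaf) 1800073 17 (.node
  .leaf 1800075 5 .leaf))))) 1800077 7 (.node (.node (.node (.node .leaf 1800079 0 (.node .leaf
  1800082 32 .leaf)) 1800086 19 (.node (.node .leaf 1800091 5 .leaf) 1800095 0 (.node .leaf 1802112
  36 .leaf))) 1802114 14 (.node (.node (.node .leaf 1802116 19 .leaf) 1802118 9 (.node .leaf 1802121
  17 .leaf)) 1802123 5 (.node (.node .leaf 1802125 7 .leaf) 1802127 0 (.node .leaf 1802130 14
  .leaf)))) 1802134 9 (.node (.node (.node .leaf 1802139 0 (.node .leaf 1802143 0 .leaf)) 2097024 36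
  (.node (.node .leaf 2097025 23 .leaf) 2097026 14 (.node .leaf 2097027 10 .leaf))) 2097028 18
  (.node (.node (.node .leaf 2097029 1 .leaf) 2097030 9 (.node .leaf 2097031 0 .leaf)) 2097033 5
  (.node (.node .leaf 2097035 0 .leaf) 2097037 0 (.node .leaf 2097039 0 .leaf)))))))))))

theorem certificate_all_isCertifiedState :
    certificate.all (isCertifiedState certificate) = true := by
  decide +kernel

theorem exists_find?_certificate_stepKey {s v : ℕ} (hs : certificate.find? s = some v)
    {hit₁ hit₂ : Bool} (hhit : ¬(hit₁ ∧ hit₂)) (h₁ : hit₁ → s % 2 = 0)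
    (h₂ : hit₂ → s / 128 % 2 = 0) :
    ∃ v', certificate.find? (stepKey s hit₁ hit₂) = some v' ∧
      22 * (hit₁ || hit₂).toNat + v' ≤ 13 + v := by
  have := NatTree.all_of_find? certificate_all_isCertifiedState hs
  simp only [isCertifiedState, potentialStepOk, Bool.and_eq_true, Bool.or_eq_true, beq_iff_eq,
    Option.any_eq_true, decide_eq_true_eq] at this
  cases hit₁ <;> cases hit₂ <;> simp_all

namespace IsPackingColoring

variable {p : ℕ} {c : ℤ → ℕ}

theorem card_colorClass_one_add_two_le (hc : IsPackingColoring (distGraph 4 7) p c) (N : ℕ) :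
    22 * (#(colorClass c N 1) + #(colorClass c N 2)) ≤ 13 * N + 63 := by
  set reg₁ := shiftRegister 72 fun i => c i == 1
  set reg₂ := shiftRegister 9420 fun i => c i == 2
  have hreg₁ : ∀ n, reg₁ n < 128 := shiftRegister_lt_two_pow (w := 7) (by norm_num) _
  have hcard : #(colorClass c N 1) + #(colorClass c N 2) =
      ∑ i ∈ range N, ((c i == 1) || (c i == 2)).toNat := by
    simp only [colorClass, card_filter, ← sum_add_distrib]
    refine sum_congr rfl fun i _ => ?_
    by_cases h1 : c i = 1 <;> by_cases h2 : c i = 2 <;> simp [h1, h2, beq_false_of_ne]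
  rw [hcard]
  refine sum_le_of_potential (P := fun n => certificate.find? (reg₁ n + 128 * reg₂ n)) rfl
    (fun n v hv => ?_) N
  have hreg₁n := hreg₁ n
  have hkey : reg₁ (n + 1) + 128 * reg₂ (n + 1) =
      stepKey (reg₁ n + 128 * reg₂ n) (c n == 1) (c n == 2) := by
    simp only [stepKey, show (reg₁ n + 128 * reg₂ n) % 128 = reg₁ n by omega,
      show (reg₁ n + 128 * reg₂ n) / 128 = reg₂ n by omega]
    rfl
  rw [hkey]
  refine exists_find?_certificate_stepKey hv (by simp; omega) (fun h => ?_) (fun h => ?_)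
  · have : (reg₁ n).testBit 0 = false := hc.testBit_zero_shiftRegister
      (fun _ => isShortCombination_4_7_1_of_testBit_72) (by simpa using h)
    simp only [Nat.testBit_zero, decide_eq_false_iff_not] at this
    omega
  · have : (reg₂ n).testBit 0 = false := hc.testBit_zero_shiftRegister
      (fun _ => isShortCombination_4_7_2_of_testBit_9420) (by simpa using h)
    simp only [Nat.testBit_zero, decide_eq_false_iff_not] at this
    omega

theorem card_colorClass_le_of_five_le (hc : IsPackingColoring (distGraph 4 7) p c) {r : ℕ}
    (hr : r ∈ Icc 5 15) (N : ℕ) : #(colorClass c N r) ≤ (N + 7 * r - 9) / (7 * r - 8) := by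
  have h5 := (mem_Icc.1 hr).1
  have := hc.card_colorClass_le_of_forall_lt (ℓ := 7 * r - 8) (by omega)
    (fun g hg hgr => isShortCombination_4_7_of_lt r hr g (mem_Ico.2 ⟨hg, hgr⟩)) N
  rwa [show N + (7 * r - 8) - 1 = N + 7 * r - 9 by omega] at this

theorem card_colorClass_three_le (hc : IsPackingColoring (distGraph 4 7) p c) :
    #(colorClass c 2000 3) ≤ 212 :=
  hc.card_colorClass_le_of_forall_add_lt (ℓ := 19) (by norm_num) (fun g₁ g₂ h₁ h₂ h =>
    isShortCombination_4_7_3_of_add_lt g₁ (mem_Ico.2 ⟨h₁, by omega⟩) g₂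
      (mem_Ico.2 ⟨h₂, by omega⟩) h) 2000

theorem card_colorClass_four_le (hc : IsPackingColoring (distGraph 4 7) p c) :
    #(colorClass c 2000 4) ≤ 154 :=
  hc.card_colorClass_le_of_forall_add_lt (ℓ := 26) (by norm_num) (fun g₁ g₂ h₁ h₂ h =>
    isShortCombination_4_7_4_of_add_lt g₁ (mem_Ico.2 ⟨h₁, by omega⟩) g₂
      (mem_Ico.2 ⟨h₂, by omega⟩) h) 2000

end IsPackingColoring

theorem not_isPackingColoring_distGraph_4_7_15 (c : ℤ → ℕ) :
    ¬ IsPackingColoring (distGraph 4 7) 15 c := by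
  intro hc
  have hsplit : ∑ r ∈ Icc 1 15, #(colorClass c 2000 r) = #(colorClass c 2000 1) +
      #(colorClass c 2000 2) + #(colorClass c 2000 3) + #(colorClass c 2000 4) +
      ∑ r ∈ Icc 5 15, #(colorClass c 2000 r) := by
    rw [show Icc 1 15 = {1, 2, 3, 4} ∪ Icc 5 15 by decide, sum_union (by decide)]
    simp [add_assoc]
  have hhigh : ∑ r ∈ Icc 5 15, #(colorClass c 2000 r) ≤ 420 :=
    (sum_le_sum fun r hr => hc.card_colorClass_le_of_five_le hr 2000).trans_eq (by decide)
  have := hc.card_colorClass_one_add_two_le 2000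
  have := hc.card_colorClass_three_le
  have := hc.card_colorClass_four_le
  have := hc.sum_card_colorClass 2000
  omega

theorem packing_chromatic_D47 : 16 ≤ packingChromaticNumber (distGraph 4 7) := by
  refine le_sInf ?_
  rintro _ ⟨p, rfl, c, hc⟩
  by_contra hp
  have : p < 16 := by exact_mod_cast not_le.1 hp
  exact not_isPackingColoring_distGraph_4_7_15 c (hc.mono (by omega))
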